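/- For every fixed integer m ≥ 0, as n → ∞ one has φ²_{n,m} ~ C²_m · (27/2)^n · n^{-5/2}, i.e. lim_{n→∞} φ²_{n,m} · (2/27)^n · n^{5/2} = C²_m, where C²_m = (√3 · (2m+1)! / (4√π · (m!)²)) · (9/4)^m. -/

import Mathlib

/-- The number of rooted type II triangulations of a disc with m+2 boundary
vertices and n internal vertices. -/
noncomputable def phi2 (n m : ℕ) : ℝ :=
  (2 ^ (n + 1) * Nat.factorial (2 * m + 1) * Nat.factorial (2 * m + 3 * n) : ℝ) /
    ((Nat.factorial m) ^ 2 * Nat.factorial n * Nat.factorial (2 * m + 2 * n + 2))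

/-- The constant C²_m. -/
noncomputable def C2 (m : ℕ) : ℝ :=
  (Real.sqrt 3 * Nat.factorial (2 * m + 1)) /
    (4 * Real.sqrt Real.pi * (Nat.factorial m) ^ 2) * (9 / 4) ^ m

/-!
Up to the constant `2 (2m+1)! / (m!)²`, `φ²_{n,m} (2/27)ⁿ` is
`(2m+3n)! / (n! (2m+2n+2)!) · (4/27)ⁿ`. Shifting a factorial by a fixed amount costs a power:
`(k + a)! ~ k! kᵃ`, so this is `(3n)! / (n! (2n)!) · (4/27)ⁿ · (3n)^{2m} / (2n)^{2m+2}`, and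
Stirling's formula gives `(3n)! / (n! (2n)!) ~ (27/4)ⁿ √3 / (2 √(π n))`.
-/

open Filter Topology Real Stirling
open scoped Nat

lemma tendsto_factorial_add_div_factorial_mul_pow (a : ℕ) :
    Tendsto (fun k : ℕ => ((a + k)! : ℝ) / (k ! * (k : ℝ) ^ a)) atTop (𝓝 1) := by
  induction a with
  | zero => exact tendsto_const_nhds.congr fun k => by simp [Nat.factorial_ne_zero]
  | succ a ih =>
    have hstep : Tendsto (fun k : ℕ => ((a + 1 : ℝ) + 1 * k) / (0 + 1 * k)) atTop (𝓝 1) := by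
      simpa using tendsto_add_mul_div_add_mul_atTop_nhds (a + 1 : ℝ) 0 1 one_ne_zero
    refine (mul_one (1 : ℝ) ▸ ih.mul hstep).congr' ?_
    filter_upwards [eventually_ne_atTop 0] with k hk
    rw [Nat.add_right_comm, Nat.factorial_succ]
    push_cast
    field_simp
    ring

lemma factorial_eq_stirlingSeq_mul {k : ℕ} (hk : k ≠ 0) :
    (k ! : ℝ) = stirlingSeq k * √(2 * k) * (k / exp 1) ^ k := by
  rw [stirlingSeq, mul_assoc, div_mul_cancel₀]
  positivity

lemma stirlingSeq_ne_zero {k : ℕ} (hk : k ≠ 0) : stirlingSeq k ≠ 0 := by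
  obtain ⟨j, rfl⟩ := Nat.exists_eq_succ_of_ne_zero hk
  exact (stirlingSeq'_pos j).ne'

lemma factorial_div_factorial_mul_factorial_eq {a b n : ℕ} (ha : a ≠ 0) (hb : b ≠ 0)
    (hn : n ≠ 0) :
    (((a + b) * n)! : ℝ) / ((a * n)! * (b * n)!) * ((a ^ a * b ^ b : ℝ) / (a + b) ^ (a + b)) ^ n
        * √n =
      stirlingSeq ((a + b) * n) / (stirlingSeq (a * n) * stirlingSeq (b * n))
        * √((a + b) / (2 * a * b)) := by
  have hsqrt : √(2 * ((a + b) * n : ℕ)) * √n / (√(2 * (a * n : ℕ)) * √(2 * (b * n : ℕ)))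
      = √((a + b) / (2 * a * b)) := by
    rw [← sqrt_mul (by positivity), ← sqrt_mul (by positivity), ← sqrt_div (by positivity)]
    push_cast
    field_simp
  have hpow : (((a + b) * n : ℕ) / exp 1) ^ ((a + b) * n)
      / ((((a * n : ℕ) : ℝ) / exp 1) ^ (a * n) * (((b * n : ℕ) : ℝ) / exp 1) ^ (b * n))
      * ((a ^ a * b ^ b : ℝ) / (a + b) ^ (a + b)) ^ n = 1 := by
    have : (a + b : ℝ) ≠ 0 := by positivity
    have : (a : ℝ) ≠ 0 := by positivity
    have : (b : ℝ) ≠ 0 := by positivity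
    push_cast
    simp only [mul_pow, div_pow, ← pow_mul]
    field_simp
    ring
  have := stirlingSeq_ne_zero (mul_ne_zero ha hn)
  have := stirlingSeq_ne_zero (mul_ne_zero hb hn)
  -- after Stirling's formula only the Stirling factors are left to cancel
  rw [← mul_one √((a + b) / _), ← hpow, ← hsqrt, factorial_eq_stirlingSeq_mul (by positivity),
    factorial_eq_stirlingSeq_mul (by positivity), factorial_eq_stirlingSeq_mul (by positivity)]
  field_simp

lemma tendsto_factorial_div_factorial_mul_factorial {a b : ℕ} (ha : a ≠ 0) (hb : b ≠ 0) :
    Tendsto (fun n : ℕ => (((a + b) * n)! : ℝ) / ((a * n)! * (b * n)!)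
        * ((a ^ a * b ^ b : ℝ) / (a + b) ^ (a + b)) ^ n * √n)
      atTop (𝓝 (√((a + b) / (2 * a * b)) / √π)) := by
  have hstirling {c : ℕ} (hc : c ≠ 0) : Tendsto (fun n => stirlingSeq (c * n)) atTop (𝓝 √π) :=
    tendsto_stirlingSeq_sqrt_pi.comp (tendsto_id.const_mul_atTop' (Nat.pos_of_ne_zero hc))
  have hlim := ((hstirling (c := a + b) (by omega)).div ((hstirling ha).mul (hstirling hb))
    (by positivity)).mul_const √((a + b) / (2 * a * b))
  rw [show √π / (√π * √π) * √((a + b) / (2 * a * b)) = √((a + b) / (2 * a * b)) / √π by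
    field_simp] at hlim
  refine hlim.congr' ?_
  filter_upwards [eventually_ne_atTop 0] with n hn
  exact (factorial_div_factorial_mul_factorial_eq ha hb hn).symm

lemma phi2_mul_eq (m : ℕ) {n : ℕ} (hn : n ≠ 0) :
    phi2 n m * (2 / 27) ^ n * n ^ ((5 : ℝ) / 2) =
      (2 * m + 1)! / (2 * m ! ^ 2) * (9 / 4) ^ m
        * (((3 * n)! : ℝ) / (n ! * (2 * n)!) * (4 / 27) ^ n * √n)
        * (((2 * m + 3 * n)! : ℝ) / ((3 * n)! * (3 * n : ℕ) ^ (2 * m)))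
        / (((2 * m + 2 + 2 * n)! : ℝ) / ((2 * n)! * (2 * n : ℕ) ^ (2 * m + 2))) := by
  have h52 : (n : ℝ) ^ ((5 : ℝ) / 2) = n ^ 2 * √n := by
    rw [sqrt_eq_rpow, ← rpow_natCast, ← rpow_add (by positivity)]
    norm_num
  have h427 : (4 / 27 : ℝ) ^ n = 2 ^ n * (2 / 27) ^ n := by rw [← mul_pow]; norm_num
  have h94 : (9 / 4 : ℝ) ^ m = 3 ^ (2 * m) / 2 ^ (2 * m) := by
    rw [pow_mul, pow_mul, ← div_pow]; norm_num
  rw [phi2, h52, h427, h94, Nat.add_right_comm _ (2 * n)]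
  push_cast
  field_simp
  ring

theorem phi2_asymptotics (m : ℕ) :
    Filter.Tendsto
      (fun n : ℕ => phi2 n m * (2 / 27 : ℝ) ^ n * (n : ℝ) ^ ((5 : ℝ) / 2))
      Filter.atTop (nhds (C2 m)) := by
  have hcentral := tendsto_factorial_div_factorial_mul_factorial (a := 1) (b := 2) one_ne_zero
    two_ne_zero
  norm_num at hcentral
  have hnum := (tendsto_factorial_add_div_factorial_mul_pow (2 * m)).comp
    (tendsto_id.const_mul_atTop' three_pos)
  have hden := (tendsto_factorial_add_div_factorial_mul_pow (2 * m + 2)).comp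
    (tendsto_id.const_mul_atTop' two_pos)
  have hlim := ((hcentral.const_mul ((2 * m + 1)! / (2 * m ! ^ 2) * (9 / 4) ^ m : ℝ)).mul
    hnum).div hden one_ne_zero
  rw [show (2 * m + 1)! / (2 * m ! ^ 2) * (9 / 4) ^ m * (√3 / 2 / √π) * 1 / 1 = C2 m by
    rw [C2]; field_simp; ring] at hlim
  refine hlim.congr' ?_
  filter_upwards [eventually_ne_atTop 0] with n hn
  exact (phi2_mul_eq m hn).symm
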